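/- arXiv:1112.2730 — 2 statements merged into one kernel-verified Lean document; each statement's English description precedes it below -/
import Mathlib

section
/- For every integer k ≥ 4 and ℓ ∈ {1,2}, the middle Leibniz sum satisfies ∑_{j=ℓ+1}^{k−ℓ−1} [k!/(j!(k−j)!)]·H^{j−ℓ}(j−ℓ−1)!·H^{k−j−ℓ}(k−j−ℓ−1)! ≤ C·H^{k−ℓ}(k−ℓ−1)! for a constant C depending only on ℓ, provided H ≥ 1. -/
/-!
With `a = j - ℓ` and `b = k - j - ℓ`, a term divided by `H ^ (k - ℓ) * (k - ℓ - 1)!` is at most a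
ratio of rising factorials of length `ℓ + 1`, namely `(a + b + ℓ)⁽ℓ⁺¹⁾ / (a⁽ℓ⁺¹⁾ b⁽ℓ⁺¹⁾)`, which is
at most `(ℓ + 1) ^ (ℓ + 1) * (1/a + 1/b) ^ (ℓ + 1) ≤ (ℓ + 1) ^ (ℓ + 1) * 2 ^ ℓ * (1/a² + 1/b²)`
because `ℓ ≥ 1`. Along the sum, `a` and `b` each run injectively through positive integers, and
`∑ 1/m² ≤ 2`.
-/
open Finset Nat

lemma ascFactorial_le_succ_mul_pow (ℓ : ℕ) {s : ℕ} (hs : 2 ≤ s) :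
    (s + ℓ).ascFactorial (ℓ + 1) ≤ ((ℓ + 1) * s) ^ (ℓ + 1) := by
  obtain ⟨t, rfl⟩ : ∃ t, s = t + 1 := ⟨s - 1, by omega⟩
  calc (t + 1 + ℓ).ascFactorial (ℓ + 1) = (t + ℓ + 1).ascFactorial (ℓ + 1) := by rw [add_right_comm]
    _ ≤ (t + ℓ + (ℓ + 1)) ^ (ℓ + 1) := ascFactorial_le_pow_add _ _
    _ ≤ ((ℓ + 1) * (t + 1)) ^ (ℓ + 1) := Nat.pow_le_pow_left (by nlinarith) _

lemma add_pow_le_two_pow_mul_sq_add_sq {x y : ℝ} (hx₀ : 0 ≤ x) (hx₁ : x ≤ 1) (hy₀ : 0 ≤ y)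
    (hy₁ : y ≤ 1) {n : ℕ} (hn : 2 ≤ n) : (x + y) ^ n ≤ 2 ^ (n - 1) * (x ^ 2 + y ^ 2) := by
  calc (x + y) ^ n ≤ 2 ^ (n - 1) * (x ^ n + y ^ n) := add_pow_le hx₀ hy₀ n
    _ ≤ 2 ^ (n - 1) * (x ^ 2 + y ^ 2) := by
      gcongr 2 ^ (n - 1) * (?_ + ?_)
      · exact pow_le_pow_of_le_one hx₀ hx₁ hn
      · exact pow_le_pow_of_le_one hy₀ hy₁ hn

lemma sum_inv_sq_le_two_of_injOn {s : Finset ℕ} {f : ℕ → ℕ} (hf : Set.InjOn f s)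
    (hpos : ∀ j ∈ s, 0 < f j) : ∑ j ∈ s, ((f j : ℝ) ^ 2)⁻¹ ≤ 2 := by
  rw [← sum_image (f := fun i : ℕ => ((i : ℝ) ^ 2)⁻¹) hf]
  calc ∑ i ∈ s.image f, ((i : ℝ) ^ 2)⁻¹ ≤ ∑ i ∈ Ioo 0 (s.sup f + 1), ((i : ℝ) ^ 2)⁻¹ := by
        refine sum_le_sum_of_subset_of_nonneg ?_ fun _ _ _ => by positivity
        simp only [subset_iff, mem_image, mem_Ioo, forall_exists_index, and_imp]
        rintro _ j hj rfl
        exact ⟨hpos j hj, Nat.lt_succ_of_le (le_sup hj)⟩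
    _ ≤ 2 / ((0 : ℕ) + 1) := sum_Ioo_inv_sq_le 0 _
    _ = 2 := by norm_num

section MiddleTerm

variable (ℓ : ℕ) {a b : ℕ}

lemma factorial_ratio_eq_ascFactorial_ratio (ha : 0 < a) (hb : 0 < b) :
    ((a + b + 2 * ℓ)! : ℝ) / ((a + ℓ)! * (b + ℓ)!) * (a - 1)! * (b - 1)!
      = (a + b + ℓ - 1)! * ((a + b + ℓ).ascFactorial (ℓ + 1) /
          (a.ascFactorial (ℓ + 1) * b.ascFactorial (ℓ + 1))) := by
  have hs := factorial_mul_ascFactorial' (a + b + ℓ) (ℓ + 1) (by omega)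
  have ha' := factorial_mul_ascFactorial' a (ℓ + 1) ha
  have hb' := factorial_mul_ascFactorial' b (ℓ + 1) hb
  rw [show a + b + ℓ + (ℓ + 1) - 1 = a + b + 2 * ℓ by omega] at hs
  rw [show a + (ℓ + 1) - 1 = a + ℓ by omega] at ha'
  rw [show b + (ℓ + 1) - 1 = b + ℓ by omega] at hb'
  rw [← hs, ← ha', ← hb']
  push_cast
  field_simp

lemma ascFactorial_ratio_le (ha : 0 < a) (hb : 0 < b) :
    ((a + b + ℓ).ascFactorial (ℓ + 1) : ℝ) / (a.ascFactorial (ℓ + 1) * b.ascFactorial (ℓ + 1))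
      ≤ (ℓ + 1) ^ (ℓ + 1) * ((a : ℝ)⁻¹ + (b : ℝ)⁻¹) ^ (ℓ + 1) := by
  have hnum : ((a + b + ℓ).ascFactorial (ℓ + 1) : ℝ) ≤ ((ℓ + 1) * (a + b)) ^ (ℓ + 1) := by
    exact_mod_cast ascFactorial_le_succ_mul_pow ℓ (s := a + b) (by omega)
  have hden : ((a * b) ^ (ℓ + 1) : ℝ) ≤ a.ascFactorial (ℓ + 1) * b.ascFactorial (ℓ + 1) := by
    rw [mul_pow]
    exact_mod_cast Nat.mul_le_mul (pow_succ_le_ascFactorial a _) (pow_succ_le_ascFactorial b _)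
  have ha' : (0 : ℝ) < a := by exact_mod_cast ha
  have hb' : (0 : ℝ) < b := by exact_mod_cast hb
  calc ((a + b + ℓ).ascFactorial (ℓ + 1) : ℝ) / (a.ascFactorial (ℓ + 1) * b.ascFactorial (ℓ + 1))
      ≤ ((ℓ + 1) * (a + b)) ^ (ℓ + 1) / ((a * b) ^ (ℓ + 1)) := by
        gcongr
    _ = (ℓ + 1) ^ (ℓ + 1) * ((a : ℝ)⁻¹ + (b : ℝ)⁻¹) ^ (ℓ + 1) := by
        rw [inv_add_inv ha'.ne' hb'.ne', mul_pow, mul_div_assoc, ← div_pow]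

lemma middle_term_le (hℓ : 1 ≤ ℓ) (ha : 0 < a) (hb : 0 < b) {H : ℝ} (hH : 1 ≤ H) :
    ((a + b + 2 * ℓ)! : ℝ) / ((a + ℓ)! * (b + ℓ)!) * H ^ a * (a - 1)! * H ^ b * (b - 1)!
      ≤ (ℓ + 1) ^ (ℓ + 1) * 2 ^ ℓ * (((a : ℝ) ^ 2)⁻¹ + ((b : ℝ) ^ 2)⁻¹)
          * H ^ (a + b + ℓ) * (a + b + ℓ - 1)! := by
  have hpow : H ^ a * H ^ b ≤ H ^ (a + b + ℓ) := by
    rw [← pow_add]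
    exact pow_le_pow_right₀ hH (by omega)
  have hinv : ((a : ℝ)⁻¹ + (b : ℝ)⁻¹) ^ (ℓ + 1) ≤ 2 ^ ℓ * (((a : ℝ) ^ 2)⁻¹ + ((b : ℝ) ^ 2)⁻¹) := by
    simpa only [inv_pow, add_tsub_cancel_right] using
      add_pow_le_two_pow_mul_sq_add_sq (inv_nonneg.2 a.cast_nonneg)
        (inv_le_one_of_one_le₀ (by exact_mod_cast ha)) (inv_nonneg.2 b.cast_nonneg)
        (inv_le_one_of_one_le₀ (by exact_mod_cast hb)) (n := ℓ + 1) (by omega)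
  calc ((a + b + 2 * ℓ)! : ℝ) / ((a + ℓ)! * (b + ℓ)!) * H ^ a * (a - 1)! * H ^ b * (b - 1)!
      = ((a + b + 2 * ℓ)! : ℝ) / ((a + ℓ)! * (b + ℓ)!) * (a - 1)! * (b - 1)! * (H ^ a * H ^ b) := by
        ring
    _ = (a + b + ℓ - 1)! * ((a + b + ℓ).ascFactorial (ℓ + 1) /
          (a.ascFactorial (ℓ + 1) * b.ascFactorial (ℓ + 1))) * (H ^ a * H ^ b) := by
        rw [factorial_ratio_eq_ascFactorial_ratio ℓ ha hb]
    _ ≤ (a + b + ℓ - 1)! * ((ℓ + 1) ^ (ℓ + 1) * (2 ^ ℓ * (((a : ℝ) ^ 2)⁻¹ + ((b : ℝ) ^ 2)⁻¹)))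
          * H ^ (a + b + ℓ) := by
        gcongr
        exact (ascFactorial_ratio_le ℓ ha hb).trans (by gcongr)
    _ = _ := by ring

end MiddleTerm

theorem middle_leibniz_sum_bound (ℓ : ℕ) (hℓ : ℓ = 1 ∨ ℓ = 2) :
    ∃ C : ℝ, ∀ k : ℕ, 4 ≤ k → ∀ H : ℝ, 1 ≤ H →
      ∑ j ∈ Finset.Icc (ℓ + 1) (k - ℓ - 1),
          (Nat.factorial k : ℝ) / ((Nat.factorial j : ℝ) * (Nat.factorial (k - j) : ℝ))
            * H ^ (j - ℓ) * (Nat.factorial (j - ℓ - 1) : ℝ)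
            * H ^ (k - j - ℓ) * (Nat.factorial (k - j - ℓ - 1) : ℝ)
        ≤ C * H ^ (k - ℓ) * (Nat.factorial (k - ℓ - 1) : ℝ) := by
  have hℓ₁ : 1 ≤ ℓ := by omega
  refine ⟨(ℓ + 1) ^ (ℓ + 1) * 2 ^ ℓ * 4, fun k _ H hH => ?_⟩
  set s := Icc (ℓ + 1) (k - ℓ - 1)
  have hterm : ∀ j ∈ s, (k ! : ℝ) / (j ! * (k - j)!) * H ^ (j - ℓ) * (j - ℓ - 1)!
      * H ^ (k - j - ℓ) * (k - j - ℓ - 1)!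
        ≤ (ℓ + 1) ^ (ℓ + 1) * 2 ^ ℓ * ((((j - ℓ : ℕ) : ℝ) ^ 2)⁻¹ + (((k - j - ℓ : ℕ) : ℝ) ^ 2)⁻¹)
          * H ^ (k - ℓ) * (k - ℓ - 1)! := by
    intro j hj
    rw [mem_Icc] at hj
    have h := middle_term_le ℓ hℓ₁ (a := j - ℓ) (b := k - j - ℓ) (by omega) (by omega) hH
    rwa [show j - ℓ + (k - j - ℓ) + 2 * ℓ = k by omega, show j - ℓ + ℓ = j by omega,
      show k - j - ℓ + ℓ = k - j by omega, show j - ℓ + (k - j - ℓ) + ℓ = k - ℓ by omega] at h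
  have hleft : ∑ j ∈ s, (((j - ℓ : ℕ) : ℝ) ^ 2)⁻¹ ≤ 2 :=
    sum_inv_sq_le_two_of_injOn
      (fun i hi j hj h => by simp only [coe_Icc, Set.mem_Icc, s] at hi hj; omega)
      fun j hj => by rw [mem_Icc] at hj; omega
  have hright : ∑ j ∈ s, (((k - j - ℓ : ℕ) : ℝ) ^ 2)⁻¹ ≤ 2 :=
    sum_inv_sq_le_two_of_injOn
      (fun i hi j hj h => by simp only [coe_Icc, Set.mem_Icc, s] at hi hj; omega)
      fun j hj => by rw [mem_Icc] at hj; omega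
  calc _ ≤ _ := sum_le_sum hterm
    _ = (ℓ + 1) ^ (ℓ + 1) * 2 ^ ℓ * (∑ j ∈ s, (((j - ℓ : ℕ) : ℝ) ^ 2)⁻¹
          + ∑ j ∈ s, (((k - j - ℓ : ℕ) : ℝ) ^ 2)⁻¹) * H ^ (k - ℓ) * (k - ℓ - 1)! := by
        rw [← sum_add_distrib, mul_sum, sum_mul, sum_mul]
    _ ≤ _ := by gcongr; linarith
end

section
/- For every multi-index α ∈ ℕ² with |α| ≥ 5, the sum ∑_{β ≤ α, 3 ≤ |β| ≤ |α|−2} |α|²/(|β|³(|α|−|β|)²) is bounded by 8π², uniformly in α. -/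
/-!
Grouping the multi-indices by `j = |β|`, there are at most `j + 1` of them, and with `n = |α|`
each group contributes at most `(j + 1) n² / (j³ (n - j)²) ≤ 4 / j² + 4 / (n - j)²`.
Summing over `j`, both series are bounded by `4 ∑ 1/k² = 4 · π² / 6`.
-/

open Real Finset

lemma sum_one_div_sq_comp_le_of_injOn {s : Finset ℕ} {g : ℕ → ℕ} (hg : Set.InjOn g s) :
    ∑ j ∈ s, 1 / (g j : ℝ) ^ 2 ≤ π ^ 2 / 6 := by
  rw [← sum_image (f := fun k : ℕ => 1 / (k : ℝ) ^ 2) hg]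
  exact sum_le_hasSum _ (fun _ _ => by positivity) hasSum_zeta_two

lemma card_filter_add_eq_le (T : Finset (ℕ × ℕ)) (j : ℕ) :
    #{β ∈ T | β.1 + β.2 = j} ≤ j + 1 := by
  rw [← Nat.card_antidiagonal j]
  exact card_le_card fun β hβ => mem_antidiagonal.mpr (mem_filter.mp hβ).2

lemma sum_comp_add_le_sum_succ_mul {T : Finset (ℕ × ℕ)} {t : Finset ℕ} {f : ℕ → ℝ}
    (hf : ∀ j ∈ t, 0 ≤ f j) (hT : ∀ β ∈ T, β.1 + β.2 ∈ t) :
    ∑ β ∈ T, f (β.1 + β.2) ≤ ∑ j ∈ t, (j + 1) * f j := by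
  rw [← sum_fiberwise_of_maps_to hT]
  refine sum_le_sum fun j hj => ?_
  calc ∑ β ∈ T with β.1 + β.2 = j, f (β.1 + β.2)
      = #{β ∈ T | β.1 + β.2 = j} * f j := by
        rw [sum_congr rfl fun β hβ => by rw [(mem_filter.mp hβ).2], sum_const, nsmul_eq_mul]
    _ ≤ (j + 1) * f j := by
        gcongr
        · exact hf j hj
        · exact_mod_cast card_filter_add_eq_le T j

lemma succ_mul_sq_add_div_le {a b : ℝ} (ha : 1 ≤ a) (hb : 0 < b) :
    (a + 1) * ((a + b) ^ 2 / (a ^ 3 * b ^ 2)) ≤ 4 / a ^ 2 + 4 / b ^ 2 := by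
  have ha₀ : 0 < a := by linarith
  calc (a + 1) * ((a + b) ^ 2 / (a ^ 3 * b ^ 2))
      ≤ (2 * a) * (2 * (a ^ 2 + b ^ 2) / (a ^ 3 * b ^ 2)) := by
        gcongr
        · linarith
        · nlinarith [sq_nonneg (a - b)]
    _ = 4 / a ^ 2 + 4 / b ^ 2 := by field_simp; ring

lemma natCast_succ_mul_sq_div_le {n j : ℕ} (hj : 1 ≤ j) (hjn : j < n) :
    ((j : ℝ) + 1) * ((n : ℝ) ^ 2 / ((j : ℝ) ^ 3 * ((n - j : ℕ) : ℝ) ^ 2))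
      ≤ 4 / (j : ℝ) ^ 2 + 4 / ((n - j : ℕ) : ℝ) ^ 2 := by
  have hn : (n : ℝ) = j + ((n - j : ℕ) : ℝ) := by
    rw [Nat.cast_sub hjn.le]; ring
  rw [hn]
  exact succ_mul_sq_add_div_le (by exact_mod_cast hj) (by exact_mod_cast Nat.sub_pos_of_lt hjn)

theorem multiindex_sum_bound_general (α : ℕ × ℕ) :
    ∑ β ∈ (Finset.range (α.1 + 1) ×ˢ Finset.range (α.2 + 1)).filter
        (fun β => 3 ≤ β.1 + β.2 ∧ β.1 + β.2 ≤ α.1 + α.2 - 2),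
      ((α.1 + α.2 : ℕ) : ℝ) ^ 2
        / (((β.1 + β.2 : ℕ) : ℝ) ^ 3 * ((α.1 + α.2 - (β.1 + β.2) : ℕ) : ℝ) ^ 2)
      ≤ 8 * Real.pi ^ 2 := by
  set n := α.1 + α.2
  have hreflect : Set.InjOn (n - ·) (Icc 3 (n - 2) : Set ℕ) := by
    intro x hx y hy hxy
    simp only [coe_Icc, Set.mem_Icc] at hx hy hxy
    omega
  calc _ ≤ ∑ j ∈ Icc 3 (n - 2),
          ((j : ℝ) + 1) * ((n : ℝ) ^ 2 / ((j : ℝ) ^ 3 * ((n - j : ℕ) : ℝ) ^ 2)) :=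
        sum_comp_add_le_sum_succ_mul (fun _ _ => by positivity)
          fun β hβ => mem_Icc.mpr (mem_filter.mp hβ).2
    _ ≤ ∑ j ∈ Icc 3 (n - 2), (4 / (j : ℝ) ^ 2 + 4 / ((n - j : ℕ) : ℝ) ^ 2) :=
        sum_le_sum fun j hj => by
          obtain ⟨hj₃, hjn⟩ := mem_Icc.mp hj
          exact natCast_succ_mul_sq_div_le (by omega) (by omega)
    _ = 4 * ∑ j ∈ Icc 3 (n - 2), 1 / (j : ℝ) ^ 2
          + 4 * ∑ j ∈ Icc 3 (n - 2), 1 / ((n - j : ℕ) : ℝ) ^ 2 := by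
        simp only [sum_add_distrib, mul_sum, mul_one_div]
    _ ≤ 4 * (π ^ 2 / 6) + 4 * (π ^ 2 / 6) := by
        gcongr
        · simpa using sum_one_div_sq_comp_le_of_injOn (Set.injOn_id (Icc 3 (n - 2) : Set ℕ))
        · exact sum_one_div_sq_comp_le_of_injOn hreflect
    _ ≤ 8 * π ^ 2 := by linarith [sq_nonneg π]

theorem multiindex_sum_bound (α : ℕ × ℕ) (hα : 5 ≤ α.1 + α.2) :
    ∑ β ∈ (Finset.range (α.1 + 1) ×ˢ Finset.range (α.2 + 1)).filter
        (fun β => 3 ≤ β.1 + β.2 ∧ β.1 + β.2 ≤ α.1 + α.2 - 2),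
      ((α.1 + α.2 : ℕ) : ℝ) ^ 2
        / (((β.1 + β.2 : ℕ) : ℝ) ^ 3 * ((α.1 + α.2 - (β.1 + β.2) : ℕ) : ℝ) ^ 2)
      ≤ 8 * Real.pi ^ 2 :=
  multiindex_sum_bound_general α
end
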